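/- Let (X, d_X) be a finite pseudometric space, let m^X and m^Y be two irreducible and aperiodic transition kernels on X, and take the cost matrix C(x,x') = d_X(x,x'). Define C^{(0)} := C and C^{(l+1)}_{ij} := d_W(m^X_i, m^Y_j; C^{(l)}). Then the sequence of matrices (C^{(k)})_{k∈ℕ} converges entrywise to a constant matrix: for every (i,j), lim_{k→∞} C^{(k)}_{ij} = lim_{k→∞} d_WL^{(k)}((X, m^X, μ^X), (X, m^Y, μ^Y); C), where μ^X and μ^Y are the unique stationary distributions of m^X and m^Y. -/
import Mathlib


open scoped BigOperators
open Filter Topology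

/-- A probability vector on a finite type. -/
def IsProb {X : Type*} [Fintype X] (ν : X → ℝ) : Prop :=
  (∀ x, 0 ≤ ν x) ∧ ∑ x, ν x = 1

/-- `μ` is a coupling of `α` and `β`. -/
def IsCoupling {X Y : Type*} [Fintype X] [Fintype Y]
    (μ : X × Y → ℝ) (α : X → ℝ) (β : Y → ℝ) : Prop :=
  (∀ z, 0 ≤ μ z) ∧ (∀ x, ∑ y, μ (x, y) = α x) ∧ (∀ y, ∑ x, μ (x, y) = β y)

/-- A finite Markov chain: a transition kernel together with an initial distribution. -/
structure MarkovChain (X : Type*) [Fintype X] where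
  kernel : X → X → ℝ
  init : X → ℝ
  kernel_prob : ∀ x, IsProb (kernel x)
  init_prob : IsProb init

/-- A Markovian coupling between two finite Markov chains.  `trans t` is the
transition coupling used from time `t` to time `t+1` (i.e. `m^{(t+1)}`). -/
structure MarkovCoupling {X Y : Type*} [Fintype X] [Fintype Y]
    (MX : MarkovChain X) (MY : MarkovChain Y) where
  init : X × Y → ℝ
  trans : ℕ → X × Y → X × Y → ℝ
  init_coupling : IsCoupling init MX.init MY.init
  trans_coupling : ∀ t xy, IsCoupling (trans t xy) (MX.kernel xy.1) (MY.kernel xy.2)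

/-- Time-`t` law determined by an initial distribution and step kernels. -/
noncomputable def lawAux {X Y : Type*} [Fintype X] [Fintype Y]
    (ν : X × Y → ℝ) (m : ℕ → X × Y → X × Y → ℝ) : ℕ → X × Y → ℝ
  | 0 => ν
  | t + 1 => fun z => ∑ w : X × Y, m t w z * lawAux ν m t w

/-- The time-`t` law of a Markovian coupling. -/
noncomputable def MarkovCoupling.law {X Y : Type*} [Fintype X] [Fintype Y]
    {MX : MarkovChain X} {MY : MarkovChain Y} (π : MarkovCoupling MX MY) :
    ℕ → X × Y → ℝ :=
  lawAux π.init π.trans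

/-- `p` is a probability distribution on `ℕ`. -/
def IsProbNat (p : ℕ → ℝ) : Prop := (∀ t, 0 ≤ p t) ∧ HasSum p 1

/-- The Optimal Transport Markov (OTM) distance associated to `p`. -/
noncomputable def dOTM {X Y : Type*} [Fintype X] [Fintype Y] (p : ℕ → ℝ)
    (MX : MarkovChain X) (MY : MarkovChain Y) (C : X × Y → ℝ) : ℝ :=
  ⨅ π : MarkovCoupling MX MY, ∑' t, p t * ∑ z : X × Y, C z * π.law t z

/-- The Dirac mass at `k` on `ℕ`. -/
noncomputable def diracN (k : ℕ) : ℕ → ℝ := fun t => if t = k then 1 else 0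

/-- The depth-`k` WL distance, `d_WL^{(k)} = d_OTM^{δ_k}`. -/
noncomputable def dWL {X Y : Type*} [Fintype X] [Fintype Y] (k : ℕ)
    (MX : MarkovChain X) (MY : MarkovChain Y) (C : X × Y → ℝ) : ℝ :=
  dOTM (diracN k) MX MY C

/-- The optimal transport cost between `α` and `β` with cost matrix `C`. -/
noncomputable def dW {X Y : Type*} [Fintype X] [Fintype Y]
    (α : X → ℝ) (β : Y → ℝ) (C : X × Y → ℝ) : ℝ :=
  ⨅ μ : {μ : X × Y → ℝ // IsCoupling μ α β}, ∑ z : X × Y, C z * μ.1 z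

/-- `d` is a pseudometric on `X`. -/
def IsPseudometric {X : Type*} (d : X → X → ℝ) : Prop :=
  (∀ x y, 0 ≤ d x y) ∧ (∀ x, d x x = 0) ∧ (∀ x y, d x y = d y x) ∧
  (∀ x y z, d x z ≤ d x y + d y z)

/-- The `t`-step transition kernel. -/
noncomputable def kpow {X : Type*} [Fintype X] [DecidableEq X]
    (m : X → X → ℝ) : ℕ → X → X → ℝ
  | 0 => fun x x' => if x = x' then 1 else 0
  | t + 1 => fun x x' => ∑ y, m x y * kpow m t y x'

/-- A transition kernel is irreducible if every state can reach every state in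
some positive finite number of steps. -/
def KernelIrreducible {X : Type*} [Fintype X] [DecidableEq X] (m : X → X → ℝ) : Prop :=
  ∀ x x', ∃ t, 1 ≤ t ∧ 0 < kpow m t x x'

/-- A transition kernel is aperiodic if for every state the gcd of its return
times is `1` (i.e. every common divisor of the return times is `1`). -/
def KernelAperiodic {X : Type*} [Fintype X] [DecidableEq X] (m : X → X → ℝ) : Prop :=
  ∀ x, ∀ d : ℕ, (∀ t, 1 ≤ t → 0 < kpow m t x x → d ∣ t) → d = 1

/-- `μ` is stationary for the transition kernel `m`. -/
def IsStationaryFor {X : Type*} [Fintype X] (m : X → X → ℝ) (μ : X → ℝ) : Prop :=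
  ∀ x', ∑ x, m x x' * μ x = μ x'

/-- The recursively defined cost matrices `C^{(l)}` of the WL iteration. -/
noncomputable def CmatWL {X : Type*} [Fintype X]
    (mX mY : X → X → ℝ) (C : X × X → ℝ) : ℕ → X × X → ℝ
  | 0 => C
  | l + 1 => fun z => dW (mX z.1) (mY z.2) (CmatWL mX mY C l)

section CouplingBasics

variable {X Y : Type*} [Fintype X] [Fintype Y]

lemma prodCoupling_isCoupling {α : X → ℝ} {β : Y → ℝ}
    (hα : IsProb α) (hβ : IsProb β) :
    IsCoupling (fun z : X × Y => α z.1 * β z.2) α β := by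
  refine ⟨fun z => mul_nonneg (hα.1 _) (hβ.1 _), fun x => ?_, fun y => ?_⟩
  · simp only [← Finset.mul_sum, hβ.2, mul_one]
  · simp only [← Finset.sum_mul, hα.2, one_mul]

lemma couplings_nonempty {α : X → ℝ} {β : Y → ℝ} (hα : IsProb α) (hβ : IsProb β) :
    Nonempty {μ : X × Y → ℝ // IsCoupling μ α β} :=
  ⟨⟨_, prodCoupling_isCoupling hα hβ⟩⟩

lemma coupling_sum_one {μ : X × Y → ℝ} {α : X → ℝ} {β : Y → ℝ}
    (h : IsCoupling μ α β) (hα : ∑ x, α x = 1) : ∑ z : X × Y, μ z = 1 := by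
  rw [Fintype.sum_prod_type]
  simp only [h.2.1, hα]

lemma cost_ge {μ : X × Y → ℝ} {α : X → ℝ} {β : Y → ℝ} {C : X × Y → ℝ}
    (h : IsCoupling μ α β) (hα : ∑ x, α x = 1) {c : ℝ} (hc : ∀ z, c ≤ C z) :
    c ≤ ∑ z : X × Y, C z * μ z := by
  have : ∑ z : X × Y, c * μ z ≤ ∑ z : X × Y, C z * μ z :=
    Finset.sum_le_sum fun z _ => mul_le_mul_of_nonneg_right (hc z) (h.1 z)
  calc c = c * ∑ z : X × Y, μ z := by rw [coupling_sum_one h hα, mul_one]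
    _ = ∑ z : X × Y, c * μ z := by rw [Finset.mul_sum]
    _ ≤ _ := this

lemma cost_le {μ : X × Y → ℝ} {α : X → ℝ} {β : Y → ℝ} {C : X × Y → ℝ}
    (h : IsCoupling μ α β) (hα : ∑ x, α x = 1) {c : ℝ} (hc : ∀ z, C z ≤ c) :
    ∑ z : X × Y, C z * μ z ≤ c := by
  have : ∑ z : X × Y, C z * μ z ≤ ∑ z : X × Y, c * μ z :=
    Finset.sum_le_sum fun z _ => mul_le_mul_of_nonneg_right (hc z) (h.1 z)
  calc ∑ z : X × Y, C z * μ z ≤ ∑ z : X × Y, c * μ z := this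
    _ = c * ∑ z : X × Y, μ z := by rw [Finset.mul_sum]
    _ = c := by rw [coupling_sum_one h hα, mul_one]

lemma bddBelow_costs {α : X → ℝ} {β : Y → ℝ} {C : X × Y → ℝ}
    (hα : ∑ x, α x = 1) {c : ℝ} (hc : ∀ z, c ≤ C z) :
    BddBelow (Set.range fun μ : {μ : X × Y → ℝ // IsCoupling μ α β} =>
      ∑ z : X × Y, C z * μ.1 z) := by
  refine ⟨c, ?_⟩
  rintro _ ⟨μ, rfl⟩
  exact cost_ge μ.2 hα hc

lemma dW_le_cost {α : X → ℝ} {β : Y → ℝ} {C : X × Y → ℝ}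
    (hα : ∑ x, α x = 1) {c : ℝ} (hc : ∀ z, c ≤ C z)
    {μ : X × Y → ℝ} (hμ : IsCoupling μ α β) :
    dW α β C ≤ ∑ z : X × Y, C z * μ z :=
  ciInf_le (bddBelow_costs hα hc) ⟨μ, hμ⟩

lemma le_dW {α : X → ℝ} {β : Y → ℝ} {C : X × Y → ℝ}
    (hα : IsProb α) (hβ : IsProb β) {c : ℝ}
    (h : ∀ μ : X × Y → ℝ, IsCoupling μ α β → c ≤ ∑ z : X × Y, C z * μ z) :
    c ≤ dW α β C := by
  have : Nonempty {μ : X × Y → ℝ // IsCoupling μ α β} := couplings_nonempty hα hβ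
  exact le_ciInf fun μ => h μ.1 μ.2

lemma ge_dW_of_min {α : X → ℝ} {β : Y → ℝ} {C : X × Y → ℝ}
    (hα : IsProb α) (hβ : IsProb β) {c : ℝ} (hc : ∀ z, c ≤ C z) :
    c ≤ dW α β C :=
  le_dW hα hβ fun _ hμ => cost_ge hμ hα.2 hc

lemma exists_coupling_cost_lt {α : X → ℝ} {β : Y → ℝ} {C : X × Y → ℝ}
    (hα : IsProb α) (hβ : IsProb β) {c : ℝ} (hc : ∀ z, c ≤ C z)
    {r : ℝ} (hr : dW α β C < r) :
    ∃ μ : X × Y → ℝ, IsCoupling μ α β ∧ ∑ z : X × Y, C z * μ z < r := by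
  have : Nonempty {μ : X × Y → ℝ // IsCoupling μ α β} := couplings_nonempty hα hβ
  obtain ⟨μ, hμ⟩ := exists_lt_of_ciInf_lt hr
  exact ⟨μ.1, μ.2, hμ⟩

end CouplingBasics
section Kpow

variable {X : Type*} [Fintype X] [DecidableEq X]

lemma kpow_nonneg {m : X → X → ℝ} (hm : ∀ x, IsProb (m x)) :
    ∀ t x x', 0 ≤ kpow m t x x' := by
  intro t
  induction t with
  | zero => intro x x'; simp only [kpow]; split <;> norm_num
  | succ t ih =>
    intro x x'
    simp only [kpow]
    exact Finset.sum_nonneg fun y _ => mul_nonneg ((hm x).1 y) (ih y x')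

lemma kpow_row_sum {m : X → X → ℝ} (hm : ∀ x, IsProb (m x)) :
    ∀ t x, ∑ x', kpow m t x x' = 1 := by
  intro t
  induction t with
  | zero => intro x; simp [kpow]
  | succ t ih =>
    intro x
    simp only [kpow]
    rw [Finset.sum_comm]
    calc ∑ y, ∑ x', m x y * kpow m t y x'
        = ∑ y, m x y * ∑ x', kpow m t y x' := by
          simp only [Finset.mul_sum]
      _ = ∑ y, m x y := by simp only [ih, mul_one]
      _ = 1 := (hm x).2

lemma kpow_add {m : X → X → ℝ} (s t : ℕ) (x x'' : X) :
    kpow m (s + t) x x'' = ∑ y, kpow m s x y * kpow m t y x'' := by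
  induction s generalizing x with
  | zero =>
    simp only [Nat.zero_add, kpow]
    rw [Finset.sum_eq_single x]
    · simp
    · intro y _ hy; simp [Ne.symm hy]
    · intro h; exact absurd (Finset.mem_univ x) h
  | succ s ih =>
    have : s + 1 + t = (s + t) + 1 := by omega
    rw [this]
    simp only [kpow]
    calc ∑ y, m x y * kpow m (s + t) y x''
        = ∑ y, m x y * ∑ w, kpow m s y w * kpow m t w x'' := by
          simp only [fun y => ih y]
      _ = ∑ y, ∑ w, m x y * (kpow m s y w * kpow m t w x'') := by
          simp only [Finset.mul_sum]
      _ = ∑ w, ∑ y, m x y * (kpow m s y w * kpow m t w x'') := by rw [Finset.sum_comm]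
      _ = ∑ w, (∑ y, m x y * kpow m s y w) * kpow m t w x'' := by
          congr 1; ext w; rw [Finset.sum_mul]; congr 1; ext y; ring

lemma kpow_add_pos {m : X → X → ℝ} (hm : ∀ x, IsProb (m x)) {s t : ℕ} {x y x'' : X}
    (h1 : 0 < kpow m s x y) (h2 : 0 < kpow m t y x'') :
    0 < kpow m (s + t) x x'' := by
  rw [kpow_add]
  have hy : 0 < kpow m s x y * kpow m t y x'' := mul_pos h1 h2
  have := Finset.single_le_sum
    (f := fun w => kpow m s x w * kpow m t w x'')
    (fun w _ => mul_nonneg (kpow_nonneg hm s x w) (kpow_nonneg hm t w x''))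
    (Finset.mem_univ y)
  linarith

lemma exists_pos_entry {m : X → X → ℝ} (hm : ∀ x, IsProb (m x)) (x : X) :
    ∃ y, 0 < m x y := by
  by_contra h
  push_neg at h
  have : ∑ y, m x y ≤ 0 := Finset.sum_nonpos fun y _ => h y
  rw [(hm x).2] at this
  linarith

lemma kpow_pos_succ {m : X → X → ℝ} (hm : ∀ x, IsProb (m x)) {t : ℕ}
    (h : ∀ x x', 0 < kpow m t x x') : ∀ x x', 0 < kpow m (t + 1) x x' := by
  intro x x'
  have : t + 1 = 1 + t := by omega
  rw [this]
  obtain ⟨y, hy⟩ := exists_pos_entry hm x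
  have h1 : 0 < kpow m 1 x y := by
    simp only [kpow]
    rw [Finset.sum_eq_single y]
    · simp [hy]
    · intro w _ hw; simp [hw]
    · intro h; exact absurd (Finset.mem_univ y) h
  exact kpow_add_pos hm h1 (h y x')

lemma kpow_pos_mono {m : X → X → ℝ} (hm : ∀ x, IsProb (m x)) {t T : ℕ}
    (htT : t ≤ T) (h : ∀ x x', 0 < kpow m t x x') : ∀ x x', 0 < kpow m T x x' := by
  induction T with
  | zero => simpa [Nat.le_zero.mp htT] using h
  | succ T ih =>
    rcases Nat.lt_or_ge t (T + 1) with hlt | hge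
    · exact kpow_pos_succ hm (ih (by omega))
    · have : t = T + 1 := by omega
      subst this; exact h

end Kpow

section Semigroup

/-- A subset of `ℕ` closed under addition whose only common divisor is `1`
contains all sufficiently large naturals. -/
lemma semigroup_cofinite (S : Set ℕ)
    (hadd : ∀ a ∈ S, ∀ b ∈ S, a + b ∈ S)
    (hne : ∃ a, a ∈ S ∧ 1 ≤ a)
    (hgcd : ∀ d : ℕ, (∀ t ∈ S, d ∣ t) → d = 1) :
    ∃ N, ∀ n, N ≤ n → n ∈ S := by
  classical
  -- multiples stay in S
  have hmul : ∀ k : ℕ, 1 ≤ k → ∀ a ∈ S, k * a ∈ S := by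
    intro k hk a ha
    induction k with
    | zero => omega
    | succ k ih =>
      rcases Nat.eq_or_lt_of_le hk with h1 | h2
      · simpa [← h1] using ha
      · have := ih (by omega)
        have : (k + 1) * a = k * a + a := by ring
        rw [this]
        exact hadd _ (ih (by omega)) _ ha
  -- the submonoid S ∪ {0} of ℤ
  set M : AddSubmonoid ℤ := {
    carrier := {x : ℤ | x = 0 ∨ ∃ s ∈ S, (x : ℤ) = (s : ℤ)}
    zero_mem' := Or.inl rfl
    add_mem' := by
      rintro a b (rfl | ⟨s, hs, rfl⟩) (rfl | ⟨t, ht, rfl⟩)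
      · exact Or.inl (by ring)
      · exact Or.inr ⟨t, ht, by ring⟩
      · exact Or.inr ⟨s, hs, by ring⟩
      · exact Or.inr ⟨s + t, hadd s hs t ht, by push_cast; ring⟩ } with hM
  have hSM : ∀ s ∈ S, (s : ℤ) ∈ M := fun s hs => Or.inr ⟨s, hs, rfl⟩
  -- the subgroup generated by S in ℤ is everything
  obtain ⟨a, ha⟩ := Int.subgroup_cyclic (AddSubgroup.closure ((↑) '' S : Set ℤ))
  have hdvd : ∀ t ∈ S, a.natAbs ∣ t := by
    intro t ht
    have : (t : ℤ) ∈ AddSubgroup.closure ((↑) '' S : Set ℤ) :=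
      AddSubgroup.subset_closure ⟨t, ht, rfl⟩
    rw [ha, ← AddSubgroup.zmultiples_eq_closure] at this
    have := Int.mem_zmultiples_iff.mp this
    have h2 : a.natAbs ∣ (t : ℤ).natAbs := Int.natAbs_dvd_natAbs.mpr this
    simpa using h2
  have ha1 : a.natAbs = 1 := hgcd _ hdvd
  have hone : (1 : ℤ) ∈ AddSubgroup.closure ((↑) '' S : Set ℤ) := by
    rw [ha, ← AddSubgroup.zmultiples_eq_closure]
    exact Int.mem_zmultiples_iff.mpr (by
      have : a ∣ 1 := by
        rcases Int.natAbs_eq a with h | h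
        · rw [h, ha1]; norm_num
        · rw [h, ha1]; exact ⟨-1, by ring⟩
      exact this)
  -- every element of the subgroup closure is a difference of two elements of M
  have hdiff : ∀ x ∈ AddSubgroup.closure ((↑) '' S : Set ℤ),
      ∃ u ∈ M, ∃ v ∈ M, x = u - v := by
    intro x hx
    refine AddSubgroup.closure_induction ?_ ?_ ?_ ?_ hx
    · rintro y ⟨s, hs, rfl⟩
      exact ⟨s, hSM s hs, 0, M.zero_mem, by ring⟩
    · exact ⟨0, M.zero_mem, 0, M.zero_mem, by ring⟩
    · rintro y z _ _ ⟨u1, hu1, v1, hv1, rfl⟩ ⟨u2, hu2, v2, hv2, rfl⟩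
      exact ⟨u1 + u2, M.add_mem hu1 hu2, v1 + v2, M.add_mem hv1 hv2, by ring⟩
    · rintro y _ ⟨u, hu, v, hv, rfl⟩
      exact ⟨v, hv, u, hu, by ring⟩
  obtain ⟨u, hu, v, hv, huv⟩ := hdiff 1 hone
  -- analyse: u = v + 1
  have hu_cases : u = 0 ∨ ∃ s ∈ S, u = (s : ℤ) := hu
  have hv_cases : v = 0 ∨ ∃ s ∈ S, v = (s : ℤ) := hv
  -- helper: if 1 ∈ S then done
  have done_of_one : (1 : ℕ) ∈ S → ∃ N, ∀ n, N ≤ n → n ∈ S := by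
    intro h1
    refine ⟨1, fun n hn => ?_⟩
    have := hmul n hn 1 h1
    simpa using this
  rcases hv_cases with rfl | ⟨b, hb, rfl⟩
  · -- v = 0, so u = 1, so 1 ∈ S
    rcases hu_cases with rfl | ⟨s, hs, rfl⟩
    · omega
    · have : s = 1 := by omega
      exact done_of_one (this ▸ hs)
  · rcases hu_cases with rfl | ⟨s, hs, hsu⟩
    · omega
    · -- s = b + 1, both in S
      have hsb : s = b + 1 := by omega
      rcases Nat.eq_zero_or_pos b with rfl | hbpos
      · exact done_of_one (by simpa [hsb] using hs)
      · -- b ≥ 1 and b, b+1 ∈ S; every n ≥ b*b is in S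
        refine ⟨b * b, fun n hn => ?_⟩
        have hb1 : b + 1 ∈ S := hsb ▸ hs
        set q := n / b with hq
        set r := n % b with hr
        have hrb : r < b := Nat.mod_lt _ hbpos
        have hnqr : b * q + r = n := Nat.div_add_mod n b
        have hnqr' : q * b + r = n := by rw [mul_comm]; exact hnqr
        have hqb : b ≤ q := by
          by_contra hqb
          push_neg at hqb
          nlinarith
        rcases Nat.eq_zero_or_pos r with hr0 | hrpos
        · have h1q : 1 ≤ q := by omega
          have := hmul q h1q b hb
          have heq : q * b = n := by omega
          exact heq ▸ this
        · have hqr : r < q := by omega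
          have key : (q - r) * b + r * (b + 1) = n := by
            have h1 : (q - r) * b + r * (b + 1) = (q - r) * b + r * b + r := by ring
            have h2 : (q - r) * b + r * b = ((q - r) + r) * b := by ring
            have h3 : (q - r) + r = q := by omega
            rw [h1, h2, h3]; exact hnqr'
          have m1 : (q - r) * b ∈ S := hmul (q - r) (by omega) b hb
          have m2 : r * (b + 1) ∈ S := hmul r hrpos (b + 1) hb1
          exact key ▸ hadd _ m1 _ m2

end Semigroup
section Primitive

lemma kernel_primitive {X : Type*} [Fintype X] [DecidableEq X]
    {m : X → X → ℝ} (hm : ∀ x, IsProb (m x))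
    (hirr : KernelIrreducible m) (haper : KernelAperiodic m) :
    ∃ T, 1 ≤ T ∧ ∀ x x', 0 < kpow m T x x' := by
  classical
  choose t ht1 ht2 using hirr
  have hS : ∀ x : X, ∃ N, ∀ n, N ≤ n → n ∈ {u : ℕ | 1 ≤ u ∧ 0 < kpow m u x x} := by
    intro x
    apply semigroup_cofinite
    · rintro a ⟨ha1, ha2⟩ b ⟨hb1, hb2⟩
      exact ⟨by omega, kpow_add_pos hm ha2 hb2⟩
    · exact ⟨t x x, ⟨ht1 x x, ht2 x x⟩, ht1 x x⟩
    · intro d hd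
      exact haper x d fun u hu1 hu2 => hd u ⟨hu1, hu2⟩
  choose N hN using hS
  set T := (Finset.univ.sup fun z : X × X => N z.1 + t z.1 z.2) + 1 with hT
  refine ⟨T, by omega, fun x x' => ?_⟩
  have hle : N x + t x x' ≤ T - 1 := by
    have := Finset.le_sup (f := fun z : X × X => N z.1 + t z.1 z.2)
      (Finset.mem_univ (x, x'))
    simpa [hT] using this
  have hmem : (T - t x x') ∈ {u : ℕ | 1 ≤ u ∧ 0 < kpow m u x x} := hN x _ (by omega)
  have hpos := kpow_add_pos hm hmem.2 (ht2 x x')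
  have hTeq : (T - t x x') + t x x' = T := by omega
  rwa [hTeq] at hpos

end Primitive

section Cmat

variable {X : Type*} [Fintype X] [DecidableEq X] [Nonempty X]
variable {mX mY : X → X → ℝ}

lemma CmatWL_succ (C : X × X → ℝ) (l : ℕ) :
    CmatWL mX mY C (l + 1) = fun z => dW (mX z.1) (mY z.2) (CmatWL mX mY C l) := rfl

lemma CmatWL_nonneg (hmX : ∀ x, IsProb (mX x)) (hmY : ∀ x, IsProb (mY x))
    {C : X × X → ℝ} (hC : ∀ z, 0 ≤ C z) : ∀ k z, 0 ≤ CmatWL mX mY C k z := by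
  intro k
  induction k with
  | zero => exact hC
  | succ k ih =>
    intro z
    exact ge_dW_of_min (hmX z.1) (hmY z.2) ih

lemma CmatWL_comp (C : X × X → ℝ) (k l : ℕ) :
    CmatWL mX mY C (k + l) = CmatWL mX mY (CmatWL mX mY C k) l := by
  induction l with
  | zero => rfl
  | succ l ih =>
    have : k + (l + 1) = (k + l) + 1 := by omega
    rw [this, CmatWL_succ, CmatWL_succ, ih]

/-- The max of a cost matrix over all entries. -/
noncomputable def Msup {X : Type*} [Fintype X] [Nonempty X] (C : X × X → ℝ) : ℝ :=
  Finset.univ.sup' (Finset.univ_nonempty) C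

/-- The min of a cost matrix over all entries. -/
noncomputable def minf {X : Type*} [Fintype X] [Nonempty X] (C : X × X → ℝ) : ℝ :=
  Finset.univ.inf' (Finset.univ_nonempty) C

lemma le_Msup (C : X × X → ℝ) (z : X × X) : C z ≤ Msup C :=
  Finset.le_sup' C (Finset.mem_univ z)

lemma minf_le (C : X × X → ℝ) (z : X × X) : minf C ≤ C z :=
  Finset.inf'_le C (Finset.mem_univ z)

lemma minf_le_Msup (C : X × X → ℝ) : minf C ≤ Msup C := by
  obtain ⟨z⟩ : Nonempty (X × X) := inferInstance
  exact le_trans (minf_le C z) (le_Msup C z)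

lemma CmatWL_succ_le_Msup (hmX : ∀ x, IsProb (mX x)) (hmY : ∀ x, IsProb (mY x))
    {C : X × X → ℝ} (hC : ∀ z, 0 ≤ C z) (k : ℕ) (z : X × X) :
    CmatWL mX mY C (k + 1) z ≤ Msup (CmatWL mX mY C k) := by
  have hprod := prodCoupling_isCoupling (hmX z.1) (hmY z.2)
  have h1 : CmatWL mX mY C (k + 1) z ≤
      ∑ w : X × X, CmatWL mX mY C k w * (mX z.1 w.1 * mY z.2 w.2) :=
    dW_le_cost (hmX z.1).2 (CmatWL_nonneg hmX hmY hC k) hprod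
  have h2 : ∑ w : X × X, CmatWL mX mY C k w * (mX z.1 w.1 * mY z.2 w.2) ≤
      Msup (CmatWL mX mY C k) :=
    cost_le hprod (hmX z.1).2 fun w => le_Msup _ w
  linarith

lemma minf_le_CmatWL_succ (hmX : ∀ x, IsProb (mX x)) (hmY : ∀ x, IsProb (mY x))
    (C : X × X → ℝ) (k : ℕ) (z : X × X) :
    minf (CmatWL mX mY C k) ≤ CmatWL mX mY C (k + 1) z :=
  ge_dW_of_min (hmX z.1) (hmY z.2) fun w => minf_le _ w

lemma Msup_anti (hmX : ∀ x, IsProb (mX x)) (hmY : ∀ x, IsProb (mY x))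
    {C : X × X → ℝ} (hC : ∀ z, 0 ≤ C z) (k : ℕ) :
    Msup (CmatWL mX mY C (k + 1)) ≤ Msup (CmatWL mX mY C k) :=
  Finset.sup'_le _ _ fun z _ => CmatWL_succ_le_Msup hmX hmY hC k z

lemma minf_mono (hmX : ∀ x, IsProb (mX x)) (hmY : ∀ x, IsProb (mY x))
    (C : X × X → ℝ) (k : ℕ) :
    minf (CmatWL mX mY C k) ≤ minf (CmatWL mX mY C (k + 1)) :=
  Finset.le_inf' _ _ fun z _ => minf_le_CmatWL_succ hmX hmY C k z

lemma sum_delta_prod (z : X × X) (C : X × X → ℝ) :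
    ∑ w : X × X, (if z.1 = w.1 then (1:ℝ) else 0) * (if z.2 = w.2 then (1:ℝ) else 0) * C w
      = C z := by
  rw [Fintype.sum_prod_type]
  rw [Finset.sum_eq_single z.1]
  · rw [Finset.sum_eq_single z.2]
    · simp
    · intro y _ hy
      simp [Ne.symm hy]
    · intro h; exact absurd (Finset.mem_univ z.2) h
  · intro x _ hx
    apply Finset.sum_eq_zero
    intro y _
    simp [Ne.symm hx]
  · intro h; exact absurd (Finset.mem_univ z.1) h

lemma CmatWL_le_kpow (hmX : ∀ x, IsProb (mX x)) (hmY : ∀ x, IsProb (mY x)) :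
    ∀ (T : ℕ) (C : X × X → ℝ), (∀ z, 0 ≤ C z) → ∀ z : X × X,
      CmatWL mX mY C T z ≤
        ∑ w : X × X, kpow mX T z.1 w.1 * kpow mY T z.2 w.2 * C w := by
  intro T
  induction T with
  | zero =>
    intro C hC z
    simp only [kpow, CmatWL]
    rw [sum_delta_prod]
  | succ T ih =>
    intro C hC z
    have hprod := prodCoupling_isCoupling (hmX z.1) (hmY z.2)
    have h1 : CmatWL mX mY C (T + 1) z ≤
        ∑ w : X × X, CmatWL mX mY C T w * (mX z.1 w.1 * mY z.2 w.2) :=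
      dW_le_cost (hmX z.1).2 (CmatWL_nonneg hmX hmY hC T) hprod
    have h2 : ∑ w : X × X, CmatWL mX mY C T w * (mX z.1 w.1 * mY z.2 w.2) ≤
        ∑ w : X × X, (∑ v : X × X, kpow mX T w.1 v.1 * kpow mY T w.2 v.2 * C v) *
          (mX z.1 w.1 * mY z.2 w.2) := by
      apply Finset.sum_le_sum
      intro w _
      exact mul_le_mul_of_nonneg_right (ih C hC w)
        (mul_nonneg ((hmX z.1).1 w.1) ((hmY z.2).1 w.2))
    have h3 : ∑ w : X × X, (∑ v : X × X, kpow mX T w.1 v.1 * kpow mY T w.2 v.2 * C v) *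
          (mX z.1 w.1 * mY z.2 w.2)
        = ∑ v : X × X, kpow mX (T + 1) z.1 v.1 * kpow mY (T + 1) z.2 v.2 * C v := by
      have hstep : ∀ v : X × X, kpow mX (T + 1) z.1 v.1 * kpow mY (T + 1) z.2 v.2
          = ∑ w : X × X, (mX z.1 w.1 * kpow mX T w.1 v.1) *
              (mY z.2 w.2 * kpow mY T w.2 v.2) := by
        intro v
        rw [Fintype.sum_prod_type]
        show (∑ y, mX z.1 y * kpow mX T y v.1) * (∑ y, mY z.2 y * kpow mY T y v.2) = _
        rw [Finset.sum_mul_sum]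
      calc ∑ w : X × X, (∑ v : X × X, kpow mX T w.1 v.1 * kpow mY T w.2 v.2 * C v) *
            (mX z.1 w.1 * mY z.2 w.2)
          = ∑ w : X × X, ∑ v : X × X, kpow mX T w.1 v.1 * kpow mY T w.2 v.2 * C v *
            (mX z.1 w.1 * mY z.2 w.2) := by
            simp only [Finset.sum_mul]
        _ = ∑ v : X × X, ∑ w : X × X, kpow mX T w.1 v.1 * kpow mY T w.2 v.2 * C v *
            (mX z.1 w.1 * mY z.2 w.2) := by rw [Finset.sum_comm]
        _ = ∑ v : X × X, (∑ w : X × X, (mX z.1 w.1 * kpow mX T w.1 v.1) *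
            (mY z.2 w.2 * kpow mY T w.2 v.2)) * C v := by
            apply Finset.sum_congr rfl
            intro v _
            rw [Finset.sum_mul]
            apply Finset.sum_congr rfl
            intro w _
            ring
        _ = ∑ v : X × X, kpow mX (T + 1) z.1 v.1 * kpow mY (T + 1) z.2 v.2 * C v := by
            apply Finset.sum_congr rfl
            intro v _
            rw [hstep v]
    linarith [h1, h2, h3.symm.le, h3.le]

lemma weighted_avg_bound {q C : X × X → ℝ} {δ : ℝ} (hδ : 0 < δ)
    (hq : ∀ z, δ ≤ q z) (hq1 : ∑ z : X × X, q z = 1) :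
    ∑ z : X × X, q z * C z ≤ Msup C - δ * (Msup C - minf C) := by
  obtain ⟨z0, -, hz0⟩ := Finset.exists_mem_eq_inf' (Finset.univ_nonempty (α := X × X)) C
  have hq0 : ∀ z, (0:ℝ) ≤ q z := fun z => le_of_lt (lt_of_lt_of_le hδ (hq z))
  have hsplit : q z0 * C z0 + ∑ z ∈ Finset.univ.erase z0, q z * C z
      = ∑ z : X × X, q z * C z :=
    Finset.add_sum_erase _ (fun z => q z * C z) (Finset.mem_univ z0)
  have hsplitq : q z0 + ∑ z ∈ Finset.univ.erase z0, q z = 1 := by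
    rw [Finset.add_sum_erase _ q (Finset.mem_univ z0), hq1]
  have herase : ∑ z ∈ Finset.univ.erase z0, q z * C z ≤
      (∑ z ∈ Finset.univ.erase z0, q z) * Msup C := by
    rw [Finset.sum_mul]
    apply Finset.sum_le_sum
    intro z _
    exact mul_le_mul_of_nonneg_left (le_Msup C z) (hq0 z)
  have hCz0 : C z0 = minf C := hz0.symm
  have hq01 : q z0 ≤ 1 := by
    have : ∀ z ∈ Finset.univ.erase z0, (0:ℝ) ≤ q z := fun z _ => hq0 z
    have := Finset.sum_nonneg this
    linarith
  have hδq : δ ≤ q z0 := hq z0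
  have hmM : minf C ≤ Msup C := minf_le_Msup C
  have h1 : ∑ z : X × X, q z * C z ≤ q z0 * minf C + (1 - q z0) * Msup C := by
    rw [← hsplit, hCz0]
    have : ∑ z ∈ Finset.univ.erase z0, q z = 1 - q z0 := by linarith
    rw [← this]
    linarith [herase]
  nlinarith [h1, hδq, hmM, hq01]

end Cmat
section Law

variable {X : Type*} [Fintype X] [DecidableEq X]
variable {MX MY : MarkovChain X}

lemma law_zero (π : MarkovCoupling MX MY) : π.law 0 = π.init := rfl

lemma law_succ (π : MarkovCoupling MX MY) (t : ℕ) (z : X × X) :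
    π.law (t + 1) z = ∑ w : X × X, π.trans t w z * π.law t w := rfl

lemma law_nonneg (π : MarkovCoupling MX MY) : ∀ t z, 0 ≤ π.law t z := by
  intro t
  induction t with
  | zero => exact fun z => π.init_coupling.1 z
  | succ t ih =>
    intro z
    rw [law_succ]
    exact Finset.sum_nonneg fun w _ => mul_nonneg ((π.trans_coupling t w).1 z) (ih w)

lemma law_sum_one (π : MarkovCoupling MX MY) : ∀ t, ∑ z : X × X, π.law t z = 1 := by
  intro t
  induction t with
  | zero => exact coupling_sum_one π.init_coupling MX.init_prob.2
  | succ t ih =>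
    calc ∑ z : X × X, π.law (t + 1) z
        = ∑ z : X × X, ∑ w : X × X, π.trans t w z * π.law t w := rfl
      _ = ∑ w : X × X, ∑ z : X × X, π.trans t w z * π.law t w := by rw [Finset.sum_comm]
      _ = ∑ w : X × X, (∑ z : X × X, π.trans t w z) * π.law t w := by
          simp only [Finset.sum_mul]
      _ = ∑ w : X × X, π.law t w := by
          apply Finset.sum_congr rfl
          intro w _
          rw [coupling_sum_one (π.trans_coupling t w) (MX.kernel_prob w.1).2, one_mul]
      _ = 1 := ih

lemma tsum_dirac (k : ℕ) (S : ℕ → ℝ) : ∑' t, diracN k t * S t = S k := by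
  rw [tsum_eq_single k]
  · simp [diracN]
  · intro t ht
    simp [diracN, ht]

end Law

section WLBounds

variable {X : Type*} [Fintype X] [DecidableEq X] [Nonempty X]
variable {mX mY : X → X → ℝ} {μX μY : X → ℝ}

lemma cost_law_step (hmX : ∀ x, IsProb (mX x)) (hmY : ∀ x, IsProb (mY x))
    {hμX : IsProb μX} {hμY : IsProb μY}
    (C0 : X × X → ℝ) (hC0 : ∀ z, 0 ≤ C0 z)
    (π : MarkovCoupling (⟨mX, μX, hmX, hμX⟩ : MarkovChain X)
      (⟨mY, μY, hmY, hμY⟩ : MarkovChain X)) (t l : ℕ) :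
    ∑ w : X × X, CmatWL mX mY C0 (l + 1) w * π.law t w
      ≤ ∑ z : X × X, CmatWL mX mY C0 l z * π.law (t + 1) z := by
  have hstep : ∀ w : X × X, CmatWL mX mY C0 (l + 1) w ≤
      ∑ z : X × X, CmatWL mX mY C0 l z * π.trans t w z := fun w =>
    dW_le_cost (hmX w.1).2 (CmatWL_nonneg hmX hmY hC0 l) (π.trans_coupling t w)
  calc ∑ w : X × X, CmatWL mX mY C0 (l + 1) w * π.law t w
      ≤ ∑ w : X × X, (∑ z : X × X, CmatWL mX mY C0 l z * π.trans t w z) * π.law t w :=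
        Finset.sum_le_sum fun w _ =>
          mul_le_mul_of_nonneg_right (hstep w) (law_nonneg π t w)
    _ = ∑ w : X × X, ∑ z : X × X, CmatWL mX mY C0 l z * π.trans t w z * π.law t w := by
        simp only [Finset.sum_mul]
    _ = ∑ z : X × X, ∑ w : X × X, CmatWL mX mY C0 l z * π.trans t w z * π.law t w := by
        rw [Finset.sum_comm]
    _ = ∑ z : X × X, CmatWL mX mY C0 l z * ∑ w : X × X, π.trans t w z * π.law t w := by
        apply Finset.sum_congr rfl
        intro z _
        rw [Finset.mul_sum]
        apply Finset.sum_congr rfl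
        intro w _
        ring
    _ = ∑ z : X × X, CmatWL mX mY C0 l z * π.law (t + 1) z := by
        apply Finset.sum_congr rfl
        intro z _
        rw [law_succ]

lemma cost_law_mono (hmX : ∀ x, IsProb (mX x)) (hmY : ∀ x, IsProb (mY x))
    {hμX : IsProb μX} {hμY : IsProb μY}
    (C0 : X × X → ℝ) (hC0 : ∀ z, 0 ≤ C0 z)
    (π : MarkovCoupling (⟨mX, μX, hmX, hμX⟩ : MarkovChain X)
      (⟨mY, μY, hmY, hμY⟩ : MarkovChain X)) :
    ∀ (j l : ℕ), ∑ z : X × X, CmatWL mX mY C0 (l + j) z * π.law 0 z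
      ≤ ∑ z : X × X, CmatWL mX mY C0 l z * π.law j z := by
  intro j
  induction j with
  | zero => intro l; simp
  | succ j ih =>
    intro l
    have h1 : l + (j + 1) = (l + 1) + j := by omega
    rw [h1]
    calc ∑ z : X × X, CmatWL mX mY C0 ((l + 1) + j) z * π.law 0 z
        ≤ ∑ z : X × X, CmatWL mX mY C0 (l + 1) z * π.law j z := ih (l + 1)
      _ ≤ ∑ z : X × X, CmatWL mX mY C0 l z * π.law (j + 1) z :=
          cost_law_step hmX hmY C0 hC0 π j l

lemma coupling_nonempty' (hmX : ∀ x, IsProb (mX x)) (hmY : ∀ x, IsProb (mY x))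
    (hμX : IsProb μX) (hμY : IsProb μY) :
    Nonempty (MarkovCoupling (⟨mX, μX, hmX, hμX⟩ : MarkovChain X)
      (⟨mY, μY, hmY, hμY⟩ : MarkovChain X)) :=
  ⟨{ init := fun z => μX z.1 * μY z.2
     trans := fun _ w z => mX w.1 z.1 * mY w.2 z.2
     init_coupling := prodCoupling_isCoupling hμX hμY
     trans_coupling := fun _ w => prodCoupling_isCoupling (hmX w.1) (hmY w.2) }⟩

lemma minf_le_dWL (hmX : ∀ x, IsProb (mX x)) (hmY : ∀ x, IsProb (mY x))
    (hμX : IsProb μX) (hμY : IsProb μY)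
    (C0 : X × X → ℝ) (hC0 : ∀ z, 0 ≤ C0 z) (k : ℕ) :
    minf (CmatWL mX mY C0 k) ≤
      dWL k (⟨mX, μX, hmX, hμX⟩ : MarkovChain X)
        (⟨mY, μY, hmY, hμY⟩ : MarkovChain X) C0 := by
  have hne := coupling_nonempty' hmX hmY hμX hμY
  rw [dWL, dOTM]
  refine le_ciInf fun π => ?_
  rw [tsum_dirac]
  have h1 := cost_law_mono hmX hmY C0 hC0 π k 0
  rw [Nat.zero_add] at h1
  have h2 : minf (CmatWL mX mY C0 k) ≤
      ∑ z : X × X, CmatWL mX mY C0 k z * π.law 0 z := by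
    have := cost_ge (C := CmatWL mX mY C0 k) π.init_coupling hμX.2
      (fun z => minf_le (CmatWL mX mY C0 k) z)
    simpa [law_zero] using this
  calc minf (CmatWL mX mY C0 k) ≤ ∑ z : X × X, CmatWL mX mY C0 k z * π.law 0 z := h2
    _ ≤ ∑ z : X × X, CmatWL mX mY C0 0 z * π.law k z := h1
    _ = ∑ z : X × X, C0 z * π.law k z := rfl

lemma dWL_le_Msup (hmX : ∀ x, IsProb (mX x)) (hmY : ∀ x, IsProb (mY x))
    (hμX : IsProb μX) (hμY : IsProb μY)
    (C0 : X × X → ℝ) (hC0 : ∀ z, 0 ≤ C0 z) (k : ℕ) :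
    dWL k (⟨mX, μX, hmX, hμX⟩ : MarkovChain X)
        (⟨mY, μY, hmY, hμY⟩ : MarkovChain X) C0 ≤ Msup (CmatWL mX mY C0 k) := by
  classical
  have hbdd : BddBelow (Set.range fun π : MarkovCoupling
      (⟨mX, μX, hmX, hμX⟩ : MarkovChain X) (⟨mY, μY, hmY, hμY⟩ : MarkovChain X) =>
      ∑' t, diracN k t * ∑ z : X × X, C0 z * π.law t z) := by
    refine ⟨0, ?_⟩
    rintro _ ⟨π, rfl⟩
    dsimp only
    rw [tsum_dirac]
    exact Finset.sum_nonneg fun z _ => mul_nonneg (hC0 z) (law_nonneg π k z)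
  refine le_of_forall_pos_le_add ?_
  intro ε hε
  set ε' := ε / (k + 1) with hε'def
  have hε'pos : 0 < ε' := by positivity
  have hsel : ∀ (l : ℕ) (w : X × X), ∃ μ : X × X → ℝ,
      IsCoupling μ (mX w.1) (mY w.2) ∧
      ∑ z : X × X, CmatWL mX mY C0 l z * μ z < CmatWL mX mY C0 (l + 1) w + ε' := by
    intro l w
    apply exists_coupling_cost_lt (hmX w.1) (hmY w.2) (CmatWL_nonneg hmX hmY hC0 l)
    have heq : CmatWL mX mY C0 (l + 1) w = dW (mX w.1) (mY w.2) (CmatWL mX mY C0 l) := rfl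
    linarith [heq.ge]
  choose sel hsel1 hsel2 using hsel
  let trF : ℕ → X × X → X × X → ℝ := fun t w =>
    if t < k then sel (k - 1 - t) w else fun z => mX w.1 z.1 * mY w.2 z.2
  have htrF : ∀ t w, IsCoupling (trF t w) (mX w.1) (mY w.2) := by
    intro t w
    by_cases h : t < k
    · simpa [trF, h] using hsel1 (k - 1 - t) w
    · simpa [trF, h] using prodCoupling_isCoupling (hmX w.1) (hmY w.2)
  let π : MarkovCoupling (⟨mX, μX, hmX, hμX⟩ : MarkovChain X)
      (⟨mY, μY, hmY, hμY⟩ : MarkovChain X) :=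
    { init := fun z => μX z.1 * μY z.2
      trans := trF
      init_coupling := prodCoupling_isCoupling hμX hμY
      trans_coupling := htrF }
  have hπtrans : ∀ t, t < k → π.trans t = sel (k - 1 - t) := by
    intro t ht
    show trF t = _
    simp [trF, ht]
  have key : ∀ j, j ≤ k →
      ∑ z : X × X, CmatWL mX mY C0 (k - j) z * π.law j z ≤
        Msup (CmatWL mX mY C0 k) + (j : ℝ) * ε' := by
    intro j
    induction j with
    | zero =>
      intro _
      simp only [Nat.sub_zero, Nat.cast_zero, zero_mul, add_zero]
      have h0 : ∑ z : X × X, CmatWL mX mY C0 k z * π.law 0 z ≤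
          Msup (CmatWL mX mY C0 k) := by
        have := cost_le (C := CmatWL mX mY C0 k) π.init_coupling hμX.2
          (fun z => le_Msup (CmatWL mX mY C0 k) z)
        simpa [law_zero] using this
      exact h0
    | succ j ih =>
      intro hjk
      have hjk' : j < k := by omega
      have ihj := ih (by omega)
      have hidx : (k - 1 - j) + 1 = k - j := by omega
      have hidx2 : k - (j + 1) = k - 1 - j := by omega
      have hcost : ∀ w : X × X,
          ∑ z : X × X, CmatWL mX mY C0 (k - (j + 1)) z * π.trans j w z ≤
            CmatWL mX mY C0 (k - j) w + ε' := by
        intro w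
        rw [hπtrans j hjk', hidx2]
        have := hsel2 (k - 1 - j) w
        rw [hidx] at this
        linarith
      calc ∑ z : X × X, CmatWL mX mY C0 (k - (j + 1)) z * π.law (j + 1) z
          = ∑ w : X × X, (∑ z : X × X, CmatWL mX mY C0 (k - (j + 1)) z * π.trans j w z) *
              π.law j w := by
            simp only [law_succ]
            calc ∑ z : X × X, CmatWL mX mY C0 (k - (j + 1)) z *
                  ∑ w : X × X, π.trans j w z * π.law j w
                = ∑ z : X × X, ∑ w : X × X, CmatWL mX mY C0 (k - (j + 1)) z *
                    (π.trans j w z * π.law j w) := by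
                  simp only [Finset.mul_sum]
              _ = ∑ w : X × X, ∑ z : X × X, CmatWL mX mY C0 (k - (j + 1)) z *
                    (π.trans j w z * π.law j w) := by rw [Finset.sum_comm]
              _ = ∑ w : X × X, (∑ z : X × X, CmatWL mX mY C0 (k - (j + 1)) z *
                    π.trans j w z) * π.law j w := by
                  apply Finset.sum_congr rfl
                  intro w _
                  rw [Finset.sum_mul]
                  apply Finset.sum_congr rfl
                  intro z _
                  ring
        _ ≤ ∑ w : X × X, (CmatWL mX mY C0 (k - j) w + ε') * π.law j w :=
            Finset.sum_le_sum fun w _ =>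
              mul_le_mul_of_nonneg_right (hcost w) (law_nonneg π j w)
        _ = ∑ w : X × X, CmatWL mX mY C0 (k - j) w * π.law j w +
              ε' * ∑ w : X × X, π.law j w := by
            rw [Finset.mul_sum, ← Finset.sum_add_distrib]
            apply Finset.sum_congr rfl
            intro w _
            ring
        _ = ∑ w : X × X, CmatWL mX mY C0 (k - j) w * π.law j w + ε' := by
            rw [law_sum_one π j, mul_one]
        _ ≤ Msup (CmatWL mX mY C0 k) + (j : ℝ) * ε' + ε' := by linarith
        _ = Msup (CmatWL mX mY C0 k) + ((j : ℕ) + 1 : ℝ) * ε' := by ring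
        _ = Msup (CmatWL mX mY C0 k) + ((j + 1 : ℕ) : ℝ) * ε' := by push_cast; ring
  have hkey := key k le_rfl
  simp only [Nat.sub_self] at hkey
  have hfin : dWL k (⟨mX, μX, hmX, hμX⟩ : MarkovChain X)
      (⟨mY, μY, hmY, hμY⟩ : MarkovChain X) C0 ≤
      ∑ z : X × X, C0 z * π.law k z := by
    rw [dWL, dOTM]
    have := ciInf_le hbdd π
    rwa [tsum_dirac] at this
  have hε'bound : (k : ℝ) * ε' ≤ ε := by
    rw [hε'def]
    rw [div_eq_mul_inv]
    have hk1 : (0:ℝ) < (k : ℝ) + 1 := by positivity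
    rw [mul_comm (ε) _, ← mul_assoc]
    have : (k : ℝ) * ((k : ℝ) + 1)⁻¹ ≤ 1 := by
      rw [mul_inv_le_iff₀ hk1]
      linarith
    nlinarith [le_of_lt hε]
  have : ∑ z : X × X, CmatWL mX mY C0 0 z * π.law k z =
      ∑ z : X × X, C0 z * π.law k z := rfl
  linarith [hkey, hfin, hε'bound, this.le, this.ge]
end WLBounds
/-- For irreducible aperiodic kernels with a pseudometric cost, the WL cost
matrices `C^{(k)}` converge entrywise to a constant matrix whose value is the
limit of the depth-`k` WL distances between the stationary chains. -/
theorem stmt11 {X : Type*} [Fintype X] [DecidableEq X]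
    (dX : X → X → ℝ) (hdX : IsPseudometric dX)
    (mX mY : X → X → ℝ)
    (hmX : ∀ x, IsProb (mX x)) (hmY : ∀ x, IsProb (mY x))
    (hirrX : KernelIrreducible mX) (haperX : KernelAperiodic mX)
    (hirrY : KernelIrreducible mY) (haperY : KernelAperiodic mY)
    (μX μY : X → ℝ) (hμX : IsProb μX) (hμY : IsProb μY)
    (hstatX : IsStationaryFor mX μX) (hstatY : IsStationaryFor mY μY)
    (huniqX : ∀ μ, IsProb μ → IsStationaryFor mX μ → μ = μX)
    (huniqY : ∀ μ, IsProb μ → IsStationaryFor mY μ → μ = μY) :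
    ∃ c : ℝ,
      Tendsto (fun k =>
          dWL k (⟨mX, μX, hmX, hμX⟩ : MarkovChain X)
            (⟨mY, μY, hmY, hμY⟩ : MarkovChain X)
            (fun z : X × X => dX z.1 z.2)) atTop (𝓝 c) ∧
      ∀ z : X × X,
        Tendsto (fun k => CmatWL mX mY (fun z : X × X => dX z.1 z.2) k z)
          atTop (𝓝 c) := by
  classical
  haveI hXne : Nonempty X := by
    by_contra h
    rw [not_nonempty_iff] at h
    have h1 := hμX.2
    rw [Finset.univ_eq_empty, Finset.sum_empty] at h1
    norm_num at h1
  set C0 : X × X → ℝ := fun z : X × X => dX z.1 z.2 with hC0def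
  have hC0 : ∀ z, 0 ≤ C0 z := fun z => hdX.1 z.1 z.2
  -- primitivity
  obtain ⟨TX, hTX1, hTX⟩ := kernel_primitive hmX hirrX haperX
  obtain ⟨TY, hTY1, hTY⟩ := kernel_primitive hmY hirrY haperY
  set T := max TX TY with hTdef
  have hTXpos : ∀ x x', 0 < kpow mX T x x' :=
    kpow_pos_mono hmX (le_max_left TX TY) hTX
  have hTYpos : ∀ x x', 0 < kpow mY T x x' :=
    kpow_pos_mono hmY (le_max_right TX TY) hTY
  set δX := Finset.univ.inf' Finset.univ_nonempty
    (fun z : X × X => kpow mX T z.1 z.2) with hδXdef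
  set δY := Finset.univ.inf' Finset.univ_nonempty
    (fun z : X × X => kpow mY T z.1 z.2) with hδYdef
  have hδXpos : 0 < δX := by
    obtain ⟨z0, -, hz0⟩ := Finset.exists_mem_eq_inf'
      (Finset.univ_nonempty (α := X × X)) (fun z : X × X => kpow mX T z.1 z.2)
    rw [hδXdef, hz0]
    exact hTXpos z0.1 z0.2
  have hδYpos : 0 < δY := by
    obtain ⟨z0, -, hz0⟩ := Finset.exists_mem_eq_inf'
      (Finset.univ_nonempty (α := X × X)) (fun z : X × X => kpow mY T z.1 z.2)
    rw [hδYdef, hz0]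
    exact hTYpos z0.1 z0.2
  have hδXle : ∀ x x', δX ≤ kpow mX T x x' := fun x x' =>
    Finset.inf'_le (fun z : X × X => kpow mX T z.1 z.2) (Finset.mem_univ (x, x'))
  have hδYle : ∀ x x', δY ≤ kpow mY T x x' := fun x x' =>
    Finset.inf'_le (fun z : X × X => kpow mY T z.1 z.2) (Finset.mem_univ (x, x'))
  set δ := δX * δY with hδdef
  have hδpos : 0 < δ := mul_pos hδXpos hδYpos
  -- the monotone envelope sequences
  set Mk : ℕ → ℝ := fun k => Msup (CmatWL mX mY C0 k) with hMkdef
  set mk : ℕ → ℝ := fun k => minf (CmatWL mX mY C0 k) with hmkdef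
  have hmono : Monotone mk := monotone_nat_of_le_succ (minf_mono hmX hmY C0)
  have hanti : Antitone Mk := antitone_nat_of_succ_le (Msup_anti hmX hmY hC0)
  have hmM : ∀ k, mk k ≤ Mk k := fun k => minf_le_Msup _
  have hbddA : BddAbove (Set.range mk) := by
    refine ⟨Mk 0, ?_⟩
    rintro _ ⟨k, rfl⟩
    exact le_trans (hmM k) (hanti (Nat.zero_le k))
  have hbddB : BddBelow (Set.range Mk) := by
    refine ⟨mk 0, ?_⟩
    rintro _ ⟨k, rfl⟩
    exact le_trans (hmono (Nat.zero_le k)) (hmM k)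
  set a := ⨆ k, mk k with hadef
  set b := ⨅ k, Mk k with hbdef
  have hma : Tendsto mk atTop (𝓝 a) := tendsto_atTop_ciSup hmono hbddA
  have hMb : Tendsto Mk atTop (𝓝 b) := tendsto_atTop_ciInf hanti hbddB
  have hab : a ≤ b := le_of_tendsto_of_tendsto' hma hMb hmM
  -- contraction
  have hcontr : ∀ k, Mk (k + T) ≤ Mk k - δ * (Mk k - mk k) := by
    intro k
    apply Finset.sup'_le
    intro z _
    have h1 : CmatWL mX mY C0 (k + T) z = CmatWL mX mY (CmatWL mX mY C0 k) T z := by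
      rw [CmatWL_comp]
    have h2 := CmatWL_le_kpow hmX hmY T (CmatWL mX mY C0 k)
      (CmatWL_nonneg hmX hmY hC0 k) z
    have hq1 : ∑ w : X × X, kpow mX T z.1 w.1 * kpow mY T z.2 w.2 = 1 := by
      rw [Fintype.sum_prod_type]
      calc ∑ x, ∑ y, kpow mX T z.1 x * kpow mY T z.2 y
          = ∑ x, kpow mX T z.1 x * ∑ y, kpow mY T z.2 y := by
            simp only [← Finset.mul_sum]
        _ = ∑ x, kpow mX T z.1 x := by
            rw [kpow_row_sum hmY]
            simp only [mul_one]
        _ = 1 := kpow_row_sum hmX T z.1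
    have h3 := weighted_avg_bound (q := fun w : X × X =>
        kpow mX T z.1 w.1 * kpow mY T z.2 w.2) (C := CmatWL mX mY C0 k) hδpos
      (fun w => mul_le_mul (hδXle z.1 w.1) (hδYle z.2 w.2) (le_of_lt hδYpos)
        (le_of_lt (hTXpos z.1 w.1)))
      hq1
    calc CmatWL mX mY C0 (k + T) z
        = CmatWL mX mY (CmatWL mX mY C0 k) T z := h1
      _ ≤ ∑ w : X × X, kpow mX T z.1 w.1 * kpow mY T z.2 w.2 * CmatWL mX mY C0 k w := h2
      _ ≤ Msup (CmatWL mX mY C0 k) - δ * (Msup (CmatWL mX mY C0 k) -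
            minf (CmatWL mX mY C0 k)) := h3
      _ = Mk k - δ * (Mk k - mk k) := rfl
  have hblea : b ≤ a := by
    have hL : Tendsto (fun k => Mk (k + T)) atTop (𝓝 b) :=
      hMb.comp (tendsto_add_atTop_nat T)
    have hR : Tendsto (fun k => Mk k - δ * (Mk k - mk k)) atTop
        (𝓝 (b - δ * (b - a))) :=
      hMb.sub (Tendsto.const_mul δ (hMb.sub hma))
    have hle := le_of_tendsto_of_tendsto' hL hR hcontr
    nlinarith
  have hceq : a = b := le_antisymm hab hblea
  have hma' : Tendsto mk atTop (𝓝 b) := hceq ▸ hma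
  refine ⟨b, ?_, ?_⟩
  · exact tendsto_of_tendsto_of_tendsto_of_le_of_le hma' hMb
      (fun k => minf_le_dWL hmX hmY hμX hμY C0 hC0 k)
      (fun k => dWL_le_Msup hmX hmY hμX hμY C0 hC0 k)
  · intro z
    exact tendsto_of_tendsto_of_tendsto_of_le_of_le hma' hMb
      (fun k => minf_le (CmatWL mX mY C0 k) z)
      (fun k => le_Msup (CmatWL mX mY C0 k) z)
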